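/- Let G = {m₁, …, m_q, n₁, n₂} be a 2-semidominant set of monomials such that for every monomial multidegree m, the number of subsets L ⊆ G with lcm(L) = m that is shared by more than one subset is even. Then both n₁ and n₂ divide lcm(m₁, …, m_q). -/

import Mathlib

/-!
Let `A = G \ {n₁, n₂}` and `E = lcm G`. A nondominant `nᵢ` is covered exponentwise by the
other generators, so dropping it does not change the lcm: every `L` with `A ⊊ L ⊆ G` has
`lcm L = E`. Conversely a dominant generator is the only one reaching its top exponent, so
every `L ∈ B_E` contains `A`. Thus `B_E` is the four-element interval `[A, G]`, or that
interval without `A`; the parity hypothesis rules out the latter, whence `lcm A = E`.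
-/

open Finset

variable {X : Type*} [DecidableEq X]

/-- The lcm of a finite set of monomials (monomials = finitely supported
exponent functions): pointwise maximum of exponents. -/
noncomputable def mlcm (L : Finset (X →₀ ℕ)) : X →₀ ℕ := L.sup id

/-- `m` is dominant with respect to `G`: some variable `x` appears in `m`
with exponent at least `k > 0` while every other element of `G` has
`x`-exponent `< k`. -/
def Dominant (G : Finset (X →₀ ℕ)) (m : X →₀ ℕ) : Prop :=
  ∃ x : X, ∃ k : ℕ, 0 < k ∧ k ≤ m x ∧ ∀ m' ∈ G, m' ≠ m → m' x < k

/-- Total degree of a monomial: sum of its exponents. -/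
def mdeg (m : X →₀ ℕ) : ℕ := m.sum fun _ e => e

lemma Finset.erase_subset_of_erase_erase_subset {α : Type*} [DecidableEq α] {s t : Finset α}
    {a b : α} (h : (s.erase a).erase b ⊆ t) (ha : a ∈ t) : s.erase b ⊆ t := by
  intro y hy
  by_cases hya : y = a
  · exact hya ▸ ha
  · exact h (mem_erase.2 ⟨(mem_erase.1 hy).1, mem_erase.2 ⟨hya, (mem_erase.1 hy).2⟩⟩)

lemma Finset.mem_of_erase_subset_of_even_card {α : Type*} [DecidableEq α] {s t : Finset α}
    {a : α} (ha : a ∈ t) (hst : s ⊆ t) (hts : t.erase a ⊆ s) (hs : Even s.card)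
    (ht : Even t.card) : a ∈ s := by
  by_contra has
  have hs_eq : s = t.erase a := (subset_erase.2 ⟨hst, has⟩).antisymm hts
  rw [hs_eq, card_erase_of_mem ha] at hs
  rw [← Nat.sub_add_cancel (card_pos.2 ⟨a, ha⟩), Nat.even_add_one] at ht
  exact ht hs

omit [DecidableEq X] in
lemma mlcm_apply (L : Finset (X →₀ ℕ)) (x : X) : mlcm L x = L.sup (· x) :=
  apply_sup_eq_sup_comp (fun m : X →₀ ℕ => m x) (fun _ _ => rfl) rfl

omit [DecidableEq X] in
lemma mlcm_mono {L M : Finset (X →₀ ℕ)} (h : L ⊆ M) : mlcm L ≤ mlcm M :=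
  sup_mono h

omit [DecidableEq X] in
lemma le_mlcm {L : Finset (X →₀ ℕ)} {m : X →₀ ℕ} (h : m ∈ L) : m ≤ mlcm L :=
  le_sup (f := id) h

lemma mlcm_insert (a : X →₀ ℕ) (L : Finset (X →₀ ℕ)) : mlcm (insert a L) = a ⊔ mlcm L :=
  sup_insert

lemma le_mlcm_erase_of_not_dominant {G : Finset (X →₀ ℕ)} {n : X →₀ ℕ}
    (h : ¬ Dominant G n) : n ≤ mlcm (G.erase n) := by
  intro x
  rcases Nat.eq_zero_or_pos (n x) with h0 | h0
  · simp [h0]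
  · obtain ⟨m, hmG, hmn, hle⟩ : ∃ m ∈ G, m ≠ n ∧ n x ≤ m x := by
      simpa [Dominant] using fun hk : ∀ m ∈ G, m ≠ n → m x < n x => h ⟨x, n x, h0, le_rfl, hk⟩
    rw [mlcm_apply]
    exact hle.trans (le_sup (f := (· x)) (mem_erase.2 ⟨hmn, hmG⟩))

lemma mlcm_eq_of_erase_subset_of_not_dominant {G L : Finset (X →₀ ℕ)} {n : X →₀ ℕ}
    (hn : n ∈ G) (h : ¬ Dominant G n) (hGL : G.erase n ⊆ L) (hLG : L ⊆ G) :
    mlcm L = mlcm G := by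
  refine le_antisymm (mlcm_mono hLG) (le_trans ?_ (mlcm_mono hGL))
  conv_lhs => rw [← insert_erase hn]
  rw [mlcm_insert]
  exact sup_le (le_mlcm_erase_of_not_dominant h) le_rfl

lemma mem_of_dominant_of_le_mlcm {G L : Finset (X →₀ ℕ)} {m : X →₀ ℕ} (hm : m ∈ G)
    (hd : Dominant G m) (hLG : L ⊆ G) (hGL : mlcm G ≤ mlcm L) : m ∈ L := by
  obtain ⟨x, k, hk, hkm, hlt⟩ := hd
  have hkL : k ≤ L.sup (· x) := by
    rw [← mlcm_apply]
    exact hkm.trans ((le_mlcm hm).trans hGL x)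
  obtain ⟨b, hbL, hbk⟩ := (Finset.le_sup_iff hk).1 hkL
  by_contra hmL
  exact (hlt b (hLG hbL) (ne_of_mem_of_not_mem hbL hmL)).not_ge hbk

/-- The set `B_m` of the paper. -/
noncomputable def lcmFiber (G : Finset (X →₀ ℕ)) (m : X →₀ ℕ) : Finset (Finset (X →₀ ℕ)) :=
  G.powerset.filter (fun L => mlcm L = m)

lemma mem_lcmFiber {G L : Finset (X →₀ ℕ)} {m : X →₀ ℕ} :
    L ∈ lcmFiber G m ↔ L ⊆ G ∧ mlcm L = m := by
  simp [lcmFiber]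

section TwoNondominant

variable {G : Finset (X →₀ ℕ)} {n₁ n₂ : X →₀ ℕ}

lemma lcmFiber_mlcm_subset_Icc (hdom : ∀ m ∈ G, m ≠ n₁ → m ≠ n₂ → Dominant G m) :
    lcmFiber G (mlcm G) ⊆ Icc ((G.erase n₁).erase n₂) G := by
  intro L hL
  obtain ⟨hLG, hLlcm⟩ := mem_lcmFiber.1 hL
  refine mem_Icc.2 ⟨fun m hm => ?_, hLG⟩
  obtain ⟨hm₂, hm₁, hmG⟩ : m ≠ n₂ ∧ m ≠ n₁ ∧ m ∈ G := by simpa using hm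
  exact mem_of_dominant_of_le_mlcm hmG (hdom m hmG hm₁ hm₂) hLG hLlcm.ge

lemma Icc_erase_subset_lcmFiber_mlcm (h1 : n₁ ∈ G) (h2 : n₂ ∈ G)
    (hnd1 : ¬ Dominant G n₁) (hnd2 : ¬ Dominant G n₂) :
    (Icc ((G.erase n₁).erase n₂) G).erase ((G.erase n₁).erase n₂) ⊆ lcmFiber G (mlcm G) := by
  intro L hL
  obtain ⟨hAL, hLG⟩ : (G.erase n₁).erase n₂ ⊂ L ∧ L ⊆ G := by simpa using hL
  refine mem_lcmFiber.2 ⟨hLG, ?_⟩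
  obtain ⟨x, hxL, hxA⟩ := exists_of_ssubset hAL
  obtain hx | hx : x = n₁ ∨ x = n₂ := by
    by_contra! hx
    exact hxA (mem_erase.2 ⟨hx.2, mem_erase.2 ⟨hx.1, hLG hxL⟩⟩)
  · exact mlcm_eq_of_erase_subset_of_not_dominant h2 hnd2
      (erase_subset_of_erase_erase_subset hAL.subset (hx ▸ hxL)) hLG
  · refine mlcm_eq_of_erase_subset_of_not_dominant h1 hnd1 ?_ hLG
    rw [erase_right_comm] at hAL
    exact erase_subset_of_erase_erase_subset hAL.subset (hx ▸ hxL)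

lemma card_Icc_erase_erase (h1 : n₁ ∈ G) (h2 : n₂ ∈ G) (hne : n₁ ≠ n₂) :
    (Icc ((G.erase n₁).erase n₂) G).card = 4 := by
  have hc₁ := card_erase_add_one h1
  have hc₂ := card_erase_add_one (mem_erase.2 ⟨hne.symm, h2⟩)
  rw [card_Icc_finset ((erase_subset _ _).trans (erase_subset _ _))]
  rw [show G.card - ((G.erase n₁).erase n₂).card = 2 by omega]
  rfl

end TwoNondominant

theorem scarf_implies_divides (G : Finset (X →₀ ℕ)) (n₁ n₂ : X →₀ ℕ)
    (h1 : n₁ ∈ G) (h2 : n₂ ∈ G) (hne : n₁ ≠ n₂)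
    (hnd1 : ¬ Dominant G n₁) (hnd2 : ¬ Dominant G n₂)
    (hdom : ∀ m ∈ G, m ≠ n₁ → m ≠ n₂ → Dominant G m)
    (heven : ∀ m : X →₀ ℕ,
      2 ≤ (G.powerset.filter (fun L => mlcm L = m)).card →
      Even ((G.powerset.filter (fun L => mlcm L = m)).card)) :
    n₁ ≤ mlcm ((G.erase n₁).erase n₂) ∧ n₂ ≤ mlcm ((G.erase n₁).erase n₂) := by
  set A := (G.erase n₁).erase n₂
  have hA_mem : A ∈ Icc A G := mem_Icc.2 ⟨subset_rfl, (erase_subset _ _).trans (erase_subset _ _)⟩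
  have hIcc := card_Icc_erase_erase h1 h2 hne
  have hsup := Icc_erase_subset_lcmFiber_mlcm h1 h2 hnd1 hnd2
  have hB_even : Even (lcmFiber G (mlcm G)).card := by
    refine heven _ (le_trans ?_ (card_le_card hsup))
    rw [card_erase_of_mem hA_mem, hIcc]
    decide
  have hAB : A ∈ lcmFiber G (mlcm G) :=
    mem_of_erase_subset_of_even_card hA_mem (lcmFiber_mlcm_subset_Icc hdom) hsup hB_even
      (hIcc ▸ even_two_mul 2)
  have hA : mlcm A = mlcm G := (mem_lcmFiber.1 hAB).2
  exact ⟨hA ▸ le_mlcm h1, hA ▸ le_mlcm h2⟩
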